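/- Let 𝒳 ⊆ ℝ and 𝒮 ⊆ ℝ be finite, with min over distinct s, s' ∈ 𝒮 of |s − s'| ≥ 2 · max over x, x' ∈ 𝒳 of |x − x'|. Fix s₀ ∈ 𝒮 and define the replacement map φ : 𝒯 → 𝒯 sending t to the constant function with value t(s₀). Then for every pair t, r ∈ 𝒯, d_SI(φ(t), φ(r)) ≥ d_SI(t,r); consequently, for any two codewords of length n, the squared distance Σᵢ d_SI² does not decrease under coordinatewise replacement, i.e., it is sufficient to use the M constant functions (out of all M^Q symbols of 𝒯) in the encoding as far as the distance spectrum is concerned. -/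

import Mathlib

open Finset

/-- The distance `d_SI` between two input symbols of the associated channel. -/
noncomputable def dSI (S : Finset ℝ) (hS : S.Nonempty) (t r : ℝ → ℝ) : ℝ :=
  (S ×ˢ S).inf' (hS.product hS) fun p => |t p.1 + p.1 - (r p.2 + p.2)|

/-!
Taking `s₁ = s₂ = s₀` shows `d_SI(t, r) ≤ |t s₀ - r s₀|`. For constant symbols `a, b ∈ X` this
bound is attained: the diagonal pairs give exactly `|a - b|`, and an off-diagonal pair gives
`|a - b + s₁ - s₂| ≥ |s₁ - s₂| - |a - b| ≥ |a - b|` because the gap between interference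
symbols is at least twice the spread of `X`. Squaring and summing handles codewords.
-/

section dSI

variable {S : Finset ℝ} (hS : S.Nonempty)

lemma dSI_nonneg (t r : ℝ → ℝ) : 0 ≤ dSI S hS t r :=
  le_inf' _ _ fun _ _ => abs_nonneg _

lemma dSI_le_abs_sub {s : ℝ} (hs : s ∈ S) (t r : ℝ → ℝ) : dSI S hS t r ≤ |t s - r s| :=
  calc dSI S hS t r ≤ |t s + s - (r s + s)| := inf'_le (b := (s, s)) _ (mem_product.2 ⟨hs, hs⟩)
    _ = |t s - r s| := by ring_nf

lemma abs_sub_le_dSI_const {a b : ℝ}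
    (hgap : ∀ s ∈ S, ∀ s' ∈ S, s ≠ s' → 2 * |a - b| ≤ |s - s'|) :
    |a - b| ≤ dSI S hS (fun _ => a) (fun _ => b) := by
  refine le_inf' _ _ fun ⟨s₁, s₂⟩ hp => ?_
  obtain ⟨hs₁, hs₂⟩ := mem_product.1 hp
  show |a - b| ≤ |a + s₁ - (b + s₂)|
  rcases eq_or_ne s₁ s₂ with rfl | hne
  · exact le_of_eq (by ring_nf)
  · have htri : |s₁ - s₂| ≤ |a + s₁ - (b + s₂)| + |a - b| := by
      have := abs_sub (a + s₁ - (b + s₂)) (a - b)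
      rwa [show a + s₁ - (b + s₂) - (a - b) = s₁ - s₂ by ring] at this
    linarith [hgap s₁ hs₁ s₂ hs₂ hne]

end dSI

/-- If the minimum gap between distinct interference symbols is at least twice the
maximum spread of `X`, then replacing each symbol `t ∈ 𝒯` by the constant function with
value `t s₀` (for a fixed `s₀ ∈ S`) never decreases `d_SI`; consequently the squared
distance between codewords does not decrease under coordinatewise replacement, so it
suffices to use the `M` constant functions in the encoding as far as the distance
spectrum is concerned. -/
theorem stmt9 (X S : Finset ℝ) (hS : S.Nonempty)
    (hgap : ∀ s ∈ S, ∀ s' ∈ S, s ≠ s' → ∀ x ∈ X, ∀ x' ∈ X, |s - s'| ≥ 2 * |x - x'|)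
    (s₀ : ℝ) (hs₀ : s₀ ∈ S) :
    (∀ t r : ℝ → ℝ, (∀ s ∈ S, t s ∈ X) → (∀ s ∈ S, r s ∈ X) →
      dSI S hS (fun _ => t s₀) (fun _ => r s₀) ≥ dSI S hS t r) ∧
    (∀ (n : ℕ) (t r : Fin n → ℝ → ℝ),
      (∀ i, ∀ s ∈ S, t i s ∈ X) → (∀ i, ∀ s ∈ S, r i s ∈ X) →
      ∑ i, dSI S hS (fun _ => t i s₀) (fun _ => r i s₀) ^ 2 ≥
        ∑ i, dSI S hS (t i) (r i) ^ 2) := by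
  have replacement : ∀ t r : ℝ → ℝ, (∀ s ∈ S, t s ∈ X) → (∀ s ∈ S, r s ∈ X) →
      dSI S hS t r ≤ dSI S hS (fun _ => t s₀) (fun _ => r s₀) := fun t r ht hr =>
    (dSI_le_abs_sub hS hs₀ t r).trans <| abs_sub_le_dSI_const hS fun s hs s' hs' hne =>
      hgap s hs s' hs' hne _ (ht s₀ hs₀) _ (hr s₀ hs₀)
  refine ⟨replacement, fun n t r ht hr => sum_le_sum fun i _ => ?_⟩
  exact pow_le_pow_left₀ (dSI_nonneg hS _ _) (replacement _ _ (ht i) (hr i)) 2
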